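/- Suppose all mult instructions in the first round of a core-language algorithm have smor as their operation, and the first round has a mult instruction. Then for every phase predicate ψ we have {a,b} ⊆ fire_1(spread, ψ). -/

import Mathlib

open Classical

namespace HO

/-! ### Values

`none` is the undefined value `?`; defined values are natural numbers, where
`some 0` plays the role of `a` and `some 1` the role of `b` (so `a < b`). -/

abbrev Val := Option ℕ

def aVal : ℕ := 0
def bVal : ℕ := 1

/-! ### Operations -/

inductive Op where
  | min : Op
  | smor : Op

/-- Minimum of a multiset of defined values (`none` if the multiset is empty). -/
noncomputable def msMin (S : Multiset ℕ) : Option ℕ :=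
  if h : S.toFinset.Nonempty then some (S.toFinset.min' h) else none

/-- Smallest most frequent value of a multiset (`none` if the multiset is empty). -/
noncomputable def msSmor (S : Multiset ℕ) : Option ℕ :=
  if h : (S.toFinset.filter fun v => ∀ w ∈ S.toFinset, S.count w ≤ S.count v).Nonempty
  then some ((S.toFinset.filter fun v => ∀ w ∈ S.toFinset, S.count w ≤ S.count v).min' h)
  else none

noncomputable def Op.apply : Op → Multiset ℕ → Option ℕ
  | Op.min, S => msMin S
  | Op.smor, S => msSmor S

/-! ### Rounds

A round consists of at most one `uni` instruction followed by a list of `mult`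
instructions with non-increasing thresholds, all thresholds lying in `[0,1)`. -/

structure Round where
  uniThr : Option ℝ
  mults : List (ℝ × Op)
  wfU : ∀ t ∈ uniThr, 0 ≤ t ∧ t < 1
  wfM : ∀ q ∈ mults, 0 ≤ q.1 ∧ q.1 < 1
  sorted : (mults.map Prod.fst).Chain' (· ≥ ·)

def Round.hasUni (R : Round) : Prop := R.uniThr.isSome = true
def Round.hasMult (R : Round) : Prop := R.mults ≠ []

/-- `thr_u^i`: the threshold of the uni instruction, `-1` if absent. -/
noncomputable def Round.thrU (R : Round) : ℝ := R.uniThr.getD (-1)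

noncomputable def minThr : List ℝ → ℝ
  | [] => -1
  | [t] => t
  | t :: ts => min t (minThr ts)

/-- `thr_m^{i,k}`: the smallest threshold of a mult instruction, `-1` if absent. -/
noncomputable def Round.thrM (R : Round) : ℝ := minThr (R.mults.map Prod.fst)

/-- Result of the first applicable `mult` instruction. -/
noncomputable def firstMult (n : ℕ) (S : Multiset ℕ) : List (ℝ × Op) → Option ℕ
  | [] => none
  | (t, op) :: rest =>
      if 1 < S.toFinset.card ∧ t * n < (S.card : ℝ) then op.apply S
      else firstMult n S rest

/-- `update_i(H)`: the result of the first instruction of the round whose condition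
is satisfied by `H − {?}`, and `?` (i.e. `none`) if no condition applies. -/
noncomputable def Round.update (R : Round) (n : ℕ) (H : Multiset Val) : Option ℕ :=
  if ∃ t ∈ R.uniThr,
      (H.filterMap id).toFinset.card = 1 ∧ t * n < ((H.filterMap id).card : ℝ)
  then msMin (H.filterMap id)
  else firstMult n (H.filterMap id) R.mults

/-! ### Communication predicates for a round -/

/-- A conjunction of atomic communication predicates for one round: possibly
`φ_=` (field `eq`) and possibly `φ_thr` (field `thr`, with `0 ≤ thr < 1`). -/
structure RoundPred where
  eq : Bool
  thr : Option ℝ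
  wf : ∀ t ∈ thr, 0 ≤ t ∧ t < 1

/-- `thr_i(ψ)`: the threshold appearing in the predicate, `-1` if absent. -/
noncomputable def RoundPred.thrVal (φ : RoundPred) : ℝ := φ.thr.getD (-1)

def RoundPred.isEqualizer (φ : RoundPred) : Prop := φ.eq = true

/-- Satisfaction of a round predicate by a tuple of heard-of multisets. -/
def RoundPred.sat {α : Type} (φ : RoundPred) (n : ℕ) (Hs : Fin n → Multiset α) : Prop :=
  (φ.eq = true → ∀ p q, Hs p = Hs q) ∧
  ∀ t ∈ φ.thr, ∀ p, t * n < ((Hs p).card : ℝ)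

/-- Logical implication between round predicates. -/
def RoundPred.implies (φ φ' : RoundPred) : Prop :=
  ∀ (α : Type) (n : ℕ) (Hs : Fin n → Multiset α), φ.sat n Hs → φ'.sat n Hs

/-! ### Tuples of values -/

/-- The multiset of values of a tuple. -/
def msetOf {n : ℕ} (f : Fin n → Val) : Multiset Val := Finset.univ.val.map f

def soloB (n : ℕ) : Fin n → Val := fun _ => some bVal
def soloA (n : ℕ) : Fin n → Val := fun _ => some aVal
def soloQ (n : ℕ) : Fin n → Val := fun _ => none

/-- `bias(θ)`: a tuple over `{a,b}` with `θ·n` entries equal to `b`. -/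
def isBias {n : ℕ} (θ : ℝ) (f : Fin n → Val) : Prop :=
  (∀ p, f p = some aVal ∨ f p = some bVal) ∧
  ((Finset.univ.filter fun p => f p = some bVal).card : ℝ) = θ * n

/-- `spread = bias(1/2)`. -/
def isSpread {n : ℕ} (f : Fin n → Val) : Prop := isBias (1/2) f

/-- `bias^?(θ)`: a tuple over `{?,b}` with `θ·n` entries equal to `b`. -/
def isBiasQ {n : ℕ} (θ : ℝ) (f : Fin n → Val) : Prop :=
  (∀ p, f p = none ∨ f p = some bVal) ∧
  ((Finset.univ.filter fun p => f p = some bVal).card : ℝ) = θ * n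

/-- `bias_a^?(θ)`: a tuple over `{?,a}` with `θ·n` entries equal to `a`. -/
def isBiasQa {n : ℕ} (θ : ℝ) (f : Fin n → Val) : Prop :=
  (∀ p, f p = none ∨ f p = some aVal) ∧
  ((Finset.univ.filter fun p => f p = some aVal).card : ℝ) = θ * n

/-! ### Round transitions -/

/-- Round transition `f →[φ]_i f'`: every process receives a sub-multiset of the
multiset of sent values, the tuple of heard-of multisets jointly satisfies `φ`,
and every process updates its variable accordingly. -/
def roundTrans (R : Round) (φ : RoundPred) {n : ℕ} (f f' : Fin n → Val) : Prop :=
  ∃ Hs : Fin n → Multiset Val,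
    (∀ p, Hs p ≤ msetOf f) ∧ φ.sat n Hs ∧ ∀ p, f' p = R.update n (Hs p)

/-- `d ∈ fire_i(f,φ)`. -/
def fire (R : Round) (φ : RoundPred) {n : ℕ} (f : Fin n → Val) (d : Val) : Prop :=
  ∃ f' : Fin n → Val, roundTrans R φ f f' ∧ ∃ p, f' p = d

/-! ### Algorithms -/

/-- An algorithm of the core language: rounds `1,…,r` (`r ≥ 2`), with a designated
input-update round `ir` (`1 ≤ ir < r`). -/
structure Algo where
  r : ℕ
  rounds : ℕ → Round
  ir : ℕ
  two_le_r : 2 ≤ r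
  one_le_ir : 1 ≤ ir
  ir_lt_r : ir < r

noncomputable def Algo.thrU (A : Algo) (i : ℕ) : ℝ := (A.rounds i).thrU
noncomputable def Algo.thrM (A : Algo) (i : ℕ) : ℝ := (A.rounds i).thrM
def Algo.hasUni (A : Algo) (i : ℕ) : Prop := (A.rounds i).hasUni
def Algo.hasMult (A : Algo) (i : ℕ) : Prop := (A.rounds i).hasMult

/-- A phase predicate: a conjunction of atomic predicates for every round. -/
abbrev PhasePred := ℕ → RoundPred

/-- Phase transition `(f,d) →ψ (f',d')`. -/
def phaseTrans (A : Algo) (ψ : PhasePred) {n : ℕ} (f d f' d' : Fin n → Val) : Prop :=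
  ∃ g : ℕ → Fin n → Val,
    g 0 = f ∧
    (∀ i, 1 ≤ i → i ≤ A.r → roundTrans (A.rounds i) (ψ i) (g (i - 1)) (g i)) ∧
    (∀ p, f' p = if g A.ir p = none then f p else g A.ir p) ∧
    (∀ p, d' p = if d p = none then g A.r p else d p)

/-- A chain of round transitions for rounds `k,…,l`. -/
def roundChain (A : Algo) (ψ : PhasePred) (k l : ℕ) {n : ℕ} (f f' : Fin n → Val) : Prop :=
  ∃ g : ℕ → Fin n → Val,
    g (k - 1) = f ∧ g l = f' ∧
    ∀ i, k ≤ i → i ≤ l → roundTrans (A.rounds i) (ψ i) (g (i - 1)) (g i)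

/-! ### Syntactic notions -/

/-- Round `i` is preserving w.r.t. `ψ`. -/
def Algo.preserving (A : Algo) (ψ : PhasePred) (i : ℕ) : Prop :=
  ¬ A.hasUni i ∨ ¬ A.hasMult i ∨ (ψ i).thrVal < max (A.thrU i) (A.thrM i)

/-- Round `i` is solo-safe w.r.t. `ψ`. -/
def Algo.soloSafe (A : Algo) (ψ : PhasePred) (i : ℕ) : Prop :=
  0 ≤ A.thrU i ∧ A.thrU i ≤ (ψ i).thrVal

/-- The border threshold `thr̄ = max(1 − thr_u^1, 1 − thr_m^{1,k}/2)`. -/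
noncomputable def Algo.borderThr (A : Algo) : ℝ :=
  max (1 - A.thrU 1) (1 - A.thrM 1 / 2)

/-- `ψ` is a decider: all rounds are solo-safe w.r.t. `ψ`. -/
def Algo.decider (A : Algo) (ψ : PhasePred) : Prop :=
  ∀ i, 1 ≤ i → i ≤ A.r → A.soloSafe ψ i

/-- `ψ` is a unifier. -/
def Algo.unifier (A : Algo) (ψ : PhasePred) : Prop :=
  A.thrM 1 ≤ (ψ 1).thrVal ∧
  (A.thrU 1 ≤ (ψ 1).thrVal ∨ A.borderThr ≤ (ψ 1).thrVal) ∧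
  ∃ i, 1 ≤ i ∧ i ≤ A.ir ∧ (ψ i).isEqualizer ∧
    (∀ j, 2 ≤ j → j ≤ i → ¬ A.preserving ψ j) ∧
    (∀ j, i < j → j ≤ A.ir → A.soloSafe ψ j)

/-- The algorithm is syntactically safe. -/
def Algo.syntSafe (A : Algo) : Prop :=
  A.hasMult 1 ∧
  (∀ i, 1 ≤ i → i ≤ A.r → A.hasUni i) ∧
  (∀ q ∈ (A.rounds 1).mults, q.2 = Op.smor) ∧
  1 - A.thrU (A.ir + 1) ≤ A.thrM 1 / 2 ∧
  1 - A.thrU (A.ir + 1) ≤ A.thrU 1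

/-- Assumption (A) relative to the global predicate `gl`. -/
def Algo.assumptionA (A : Algo) (gl : PhasePred) : Prop :=
  ∀ i, 1 ≤ i → i ≤ A.r →
    (∀ j, 1 ≤ j → j < i → ¬ A.preserving gl j) →
    (A.hasUni i → (gl i).thrVal ≤ A.thrU i) ∧
    (A.hasMult i → (gl i).thrVal ≤ A.thrM i)

/-- Proviso (P): the global predicate has no equalizer and round `ir+1` has no
mult instruction. -/
def Algo.provisoP (A : Algo) (gl : PhasePred) : Prop :=
  (∀ i, 1 ≤ i → i ≤ A.r → ¬ (gl i).isEqualizer) ∧ ¬ A.hasMult (A.ir + 1)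

/-- Removing all mult instructions of a round. -/
def Round.dropMults (R : Round) : Round :=
  { uniThr := R.uniThr, mults := [], wfU := R.wfU,
    wfM := by simp, sorted := by first | exact List.IsChain.nil | exact List.chain'_nil | exact List.Chain'.nil }

/-- Removing all mult instructions of round `i` of an algorithm. -/
def Algo.dropMultsAt (A : Algo) (i : ℕ) : Algo :=
  { A with rounds := fun j => if j = i then (A.rounds j).dropMults else A.rounds j }

/-! ### Communication predicates, executions, consensus -/

/-- A communication predicate `(G ψ̄) ∧ F(ψ^1 ∧ F(ψ^2 ∧ … ∧ F ψ^k))`: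
a global phase predicate and sporadic phase predicates `ψ^1,…,ψ^k`. -/
structure CommPred where
  glob : PhasePred
  k : ℕ
  spor : ℕ → PhasePred

/-- Roundwise implication between phase predicates of an algorithm. -/
def predImplies (A : Algo) (ψ ψ' : PhasePred) : Prop :=
  ∀ i, 1 ≤ i → i ≤ A.r → (ψ i).implies (ψ' i)

/-- An execution of an algorithm respecting a communication predicate: an infinite
sequence of phase transitions under the global predicate, together with an
increasing sequence of times at which the sporadic predicates hold. -/
structure Exec (A : Algo) (C : CommPred) (n : ℕ) where
  inp : ℕ → Fin n → Val
  dec : ℕ → Fin n → Val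
  inp0 : ∀ p, inp 0 p ≠ none
  dec0 : ∀ p, dec 0 p = none
  step : ∀ s, phaseTrans A C.glob (inp s) (dec s) (inp (s + 1)) (dec (s + 1))
  sporTime : ℕ → ℕ
  mono : StrictMono sporTime
  sporStep : ∀ i, 1 ≤ i → i ≤ C.k →
    phaseTrans A (C.spor i) (inp (sporTime i)) (dec (sporTime i))
      (inp (sporTime i + 1)) (dec (sporTime i + 1))

/-- Agreement: in every reachable state, any two non-`?` decision values coincide. -/
def Agreement (A : Algo) (C : CommPred) : Prop :=
  ∀ n, 0 < n → ∀ E : Exec A C n, ∀ s p q v w,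
    E.dec s p = some v → E.dec s q = some w → v = w

/-- Termination: every execution reaches a state where all processes have decided. -/
def Termination (A : Algo) (C : CommPred) : Prop :=
  ∀ n, 0 < n → ∀ E : Exec A C n, ∃ s, ∀ p, E.dec s p ≠ none

/-- Solving consensus: agreement and termination. -/
def SolvesConsensus (A : Algo) (C : CommPred) : Prop :=
  Agreement A C ∧ Termination A C

/-! A spread tuple of size `n = 2m` holds `m` copies of `a` and `m` of `b`. Let every process
hear `m` copies of the value to be fired and `m - 1` of the other. Two distinct values rule out
the uni instruction; the `n - 1` heard values exceed every threshold below `1` once `n` is large,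
so the first mult instruction applies; it is `smor`, and the wanted value is the unique most
frequent one. -/

theorem _root_.Multiset.replicate_add_replicate_le {α : Type*} [DecidableEq α] {u v : α}
    (huv : u ≠ v) {j k : ℕ} {s : Multiset α} (hj : j ≤ s.count u) (hk : k ≤ s.count v) :
    Multiset.replicate j u + Multiset.replicate k v ≤ s := by
  rw [Multiset.le_iff_count]
  intro x
  rw [Multiset.count_add, Multiset.count_replicate, Multiset.count_replicate]
  split_ifs with hu hv hv
  · exact absurd (hu.trans hv.symm) huv
  · subst hu; simpa using hj
  · subst hv; simpa using hk
  · simp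

theorem _root_.Multiset.toFinset_replicate_add_replicate {α : Type*} [DecidableEq α] {u v : α}
    {j k : ℕ} (hj : j ≠ 0) (hk : k ≠ 0) :
    (Multiset.replicate j u + Multiset.replicate k v).toFinset = {u, v} := by
  rw [Multiset.toFinset_add, Multiset.toFinset_replicate, Multiset.toFinset_replicate,
    if_neg hj, if_neg hk, Finset.insert_eq]

lemma count_msetOf {n : ℕ} (f : Fin n → Val) (y : Val) :
    (msetOf f).count y = (Finset.univ.filter fun p => f p = y).card := by
  rw [msetOf, Multiset.count_map, Finset.card_def, Finset.filter_val]
  exact congrArg _ (Multiset.filter_congr fun _ _ => eq_comm)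

lemma isSpread.exists_count_eq {n : ℕ} {f : Fin n → Val} (hf : isSpread f) :
    ∃ m, n = 2 * m ∧ (msetOf f).count (some aVal) = m ∧ (msetOf f).count (some bVal) = m := by
  obtain ⟨hab, hcard⟩ := hf
  set m := (Finset.univ.filter fun p => f p = some bVal).card with hm
  have hn : n = 2 * m := by
    have : (n : ℝ) = ((2 * m : ℕ) : ℝ) := by push_cast; linarith
    exact_mod_cast this
  have hsplit : (Finset.univ.filter fun p => f p = some aVal)
      = Finset.univ.filter fun p => ¬ f p = some bVal :=
    Finset.filter_congr fun p _ => by rcases hab p with h | h <;> simp [h, aVal, bVal]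
  have htotal := Finset.card_filter_add_card_filter_not
    (s := (Finset.univ : Finset (Fin n))) (p := fun p => f p = some bVal)
  rw [Finset.card_univ, Fintype.card_fin, ← hm, ← hsplit] at htotal
  refine ⟨m, hn, ?_, count_msetOf f _⟩
  rw [count_msetOf]
  omega

lemma RoundPred.sat_const {α : Type} (φ : RoundPred) {n : ℕ} {H : Multiset α}
    (hH : φ.thrVal * n < H.card) : φ.sat n fun _ => H := by
  refine ⟨fun _ _ _ => rfl, fun t ht _ => ?_⟩
  rwa [RoundPred.thrVal, Option.mem_def.mp ht, Option.getD_some] at hH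

lemma RoundPred.thrVal_lt_one (φ : RoundPred) : φ.thrVal < 1 := by
  rcases h : φ.thr with _ | t
  · simp [RoundPred.thrVal, h]
  · simpa [RoundPred.thrVal, h] using (φ.wf t h).2

-- All processes hear the same `H`, so even an equalizer `φ_=` is satisfied.
lemma fire_update (R : Round) (φ : RoundPred) {n : ℕ} (hn : 0 < n) (f : Fin n → Val)
    {H : Multiset Val} (hH : H ≤ msetOf f) (hthr : φ.thrVal * n < H.card) :
    fire R φ f (R.update n H) :=
  ⟨fun _ => R.update n H, ⟨fun _ => H, fun _ => hH, φ.sat_const hthr, fun _ => rfl⟩,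
    ⟨0, hn⟩, rfl⟩

lemma msSmor_replicate_add_replicate {u v j k : ℕ} (huv : u ≠ v) (hj : 0 < j) (hjk : j < k) :
    msSmor (Multiset.replicate j u + Multiset.replicate k v) = some v := by
  set S := Multiset.replicate j u + Multiset.replicate k v
  have hcu : S.count u = j := by
    rw [Multiset.count_add, Multiset.count_replicate_self, Multiset.count_replicate,
      if_neg huv.symm, add_zero]
  have hcv : S.count v = k := by
    rw [Multiset.count_add, Multiset.count_replicate_self, Multiset.count_replicate,
      if_neg huv, zero_add]
  have hmost :
      S.toFinset.filter (fun x => ∀ w ∈ S.toFinset, S.count w ≤ S.count x) = {v} := by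
    rw [Multiset.toFinset_replicate_add_replicate hj.ne' (hj.trans hjk).ne']
    ext x
    simp only [Finset.mem_filter, Finset.mem_insert, Finset.mem_singleton,
      forall_eq_or_imp, forall_eq]
    constructor
    · rintro ⟨rfl | rfl, -, hvx⟩
      · omega
      · rfl
    · rintro rfl
      omega
  rw [msSmor, dif_pos (hmost ▸ Finset.singleton_nonempty v)]
  simp only [hmost, Finset.min'_singleton]

lemma Round.update_eq_apply_of_mults_eq_cons (R : Round) {n : ℕ} {H : Multiset Val}
    {t : ℝ} {op : Op} {rest : List (ℝ × Op)} (hR : R.mults = (t, op) :: rest)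
    (htwo : 1 < (H.filterMap id).toFinset.card) (ht : t * n < (H.filterMap id).card) :
    R.update n H = op.apply (H.filterMap id) := by
  rw [Round.update, if_neg, hR, firstMult, if_pos ⟨htwo, ht⟩]
  rintro ⟨_, _, hone, _⟩
  omega

lemma fire_of_mults_eq_smor_cons (R : Round) (φ : RoundPred) {n : ℕ} (hn : 0 < n)
    (f : Fin n → Val) {t : ℝ} {rest : List (ℝ × Op)} (hR : R.mults = (t, Op.smor) :: rest)
    {u v j k : ℕ} (huv : u ≠ v) (hj : 0 < j) (hjk : j < k)
    (hu : j ≤ (msetOf f).count (some u)) (hv : k ≤ (msetOf f).count (some v))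
    (hthr : max t φ.thrVal * n < ((j + k : ℕ) : ℝ)) :
    fire R φ f (some v) := by
  set S := Multiset.replicate j u + Multiset.replicate k v
  have hH : (S.map some).filterMap id = S := by
    rw [Multiset.filterMap_map]
    exact Multiset.filterMap_some S
  have hcard : (S.card : ℝ) = ((j + k : ℕ) : ℝ) := by simp [S]
  have htwo : 1 < S.toFinset.card := by
    rw [Multiset.toFinset_replicate_add_replicate hj.ne' (hj.trans hjk).ne',
      Finset.card_pair huv]
    omega
  have hupdate : R.update n (S.map some) = some v := by
    rw [R.update_eq_apply_of_mults_eq_cons hR (by rwa [hH]), Op.apply, hH,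
      msSmor_replicate_add_replicate huv hj hjk]
    calc t * n ≤ max t φ.thrVal * n := by gcongr; exact le_max_left _ _
      _ < _ := hthr
      _ = _ := by rw [hH, hcard]
  have hle : S.map some ≤ msetOf f := by
    simpa [S] using Multiset.replicate_add_replicate_le (Option.some_injective _ |>.ne huv) hu hv
  rw [← hupdate]
  refine fire_update R φ hn f hle ?_
  rw [Multiset.card_map, hcard]
  calc φ.thrVal * n ≤ max t φ.thrVal * n := by gcongr; exact le_max_right _ _
    _ < _ := hthr

lemma eventually_mul_add_one_lt {M : ℝ} (hM : M < 1) :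
    ∀ᶠ n : ℕ in Filter.atTop, M * n + 1 < n := by
  have h : Filter.Tendsto (fun n : ℕ => (1 - M) * n) Filter.atTop Filter.atTop :=
    tendsto_natCast_atTop_atTop.const_mul_atTop (sub_pos.mpr hM)
  filter_upwards [h.eventually_gt_atTop 1] with n hn
  linarith

/-- Lemma 4.  If the first round has a mult instruction and all
its mult instructions use `smor`, then (for all sufficiently large `n`)
`{a,b} ⊆ fire_1(spread, ψ)` for every phase predicate `ψ`. -/
theorem smor_first_round_fires_ab_from_spread (A : Algo)
    (hm : A.hasMult 1)
    (hsm : ∀ q ∈ (A.rounds 1).mults, q.2 = Op.smor) :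
    ∀ ψ : PhasePred, ∃ n₀ : ℕ, ∀ n : ℕ, n₀ ≤ n → ∀ f : Fin n → Val, isSpread f →
      fire (A.rounds 1) (ψ 1) f (some aVal) ∧
      fire (A.rounds 1) (ψ 1) f (some bVal) := by
  intro ψ
  obtain ⟨⟨t, op⟩, rest, hR⟩ := List.exists_cons_of_ne_nil hm
  have hhead : (t, op) ∈ (A.rounds 1).mults := hR ▸ List.mem_cons_self
  obtain rfl : op = Op.smor := hsm _ hhead
  have hM : max t (ψ 1).thrVal < 1 := max_lt ((A.rounds 1).wfM _ hhead).2 (ψ 1).thrVal_lt_one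
  obtain ⟨n₀, hn₀⟩ := Filter.eventually_atTop.mp
    ((eventually_mul_add_one_lt hM).and (Filter.eventually_ge_atTop 4))
  refine ⟨n₀, fun n hn f hf => ?_⟩
  obtain ⟨hlarge, hn4⟩ := hn₀ n hn
  obtain ⟨m, rfl, ha, hb⟩ := hf.exists_count_eq
  have hthr : max t (ψ 1).thrVal * ↑(2 * m) < ((m - 1 + m : ℕ) : ℝ) := by
    rw [Nat.cast_add, Nat.cast_sub (by omega)]
    push_cast at hlarge ⊢
    linarith
  exact ⟨fire_of_mults_eq_smor_cons _ _ (by omega) f hR (u := bVal) (by decide) (by omega)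
      (by omega) (by omega) ha.ge hthr,
    fire_of_mults_eq_smor_cons _ _ (by omega) f hR (u := aVal) (by decide) (by omega)
      (by omega) (by omega) hb.ge hthr⟩

end HO
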